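/- In the QR decomposition H_eq = QR of the equivalent channel matrix of the 3D MIMO code, the fourth diagonal 4×4 block R_44 of R has the same zero pattern as R_11: ⟨q_13,h_14⟩ = ⟨q_13,h_16⟩ = ⟨q_14,h_15⟩ = ⟨q_15,h_16⟩ = 0. -/

import Mathlib

noncomputable section

open scoped InnerProductSpace

namespace MIMO3D

/-- The Golden-code parameter θ = (1+√5)/2. -/
def goldenTheta : ℝ := (1 + Real.sqrt 5) / 2

/-- θ̄ = 1 − θ. -/
def goldenThetaBar : ℝ := 1 - goldenTheta

/-- α = 1 + i(1−θ). -/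
def alpha : ℂ := 1 + Complex.I * (1 - (goldenTheta : ℂ))

/-- ᾱ = 1 + i(1−θ̄). -/
def alphaBar : ℂ := 1 + Complex.I * (1 - (goldenThetaBar : ℂ))

/-- The 3D MIMO codeword matrix X(s), a 4×4 complex matrix built from the
eight information symbols s₁,…,s₈ (here 0-indexed as `s 0`,…,`s 7`). -/
def codeword (s : Fin 8 → ℂ) : Matrix (Fin 4) (Fin 4) ℂ :=
  ((Real.sqrt 5 : ℂ))⁻¹ •
  !![alpha * (s 0 + (goldenTheta : ℂ) * s 1),
     alpha * (s 2 + (goldenTheta : ℂ) * s 3),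
     -(starRingEnd ℂ alpha) * (starRingEnd ℂ (s 4) + (goldenTheta : ℂ) * starRingEnd ℂ (s 5)),
     -(starRingEnd ℂ alpha) * (starRingEnd ℂ (s 6) + (goldenTheta : ℂ) * starRingEnd ℂ (s 7));
     Complex.I * alphaBar * (s 2 + (goldenThetaBar : ℂ) * s 3),
     alphaBar * (s 0 + (goldenThetaBar : ℂ) * s 1),
     Complex.I * (starRingEnd ℂ alphaBar) * (starRingEnd ℂ (s 6) + (goldenThetaBar : ℂ) * starRingEnd ℂ (s 7)),
     -(starRingEnd ℂ alphaBar) * (starRingEnd ℂ (s 4) + (goldenThetaBar : ℂ) * starRingEnd ℂ (s 5));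
     alpha * (s 4 + (goldenTheta : ℂ) * s 5),
     alpha * (s 6 + (goldenTheta : ℂ) * s 7),
     (starRingEnd ℂ alpha) * (starRingEnd ℂ (s 0) + (goldenTheta : ℂ) * starRingEnd ℂ (s 1)),
     (starRingEnd ℂ alpha) * (starRingEnd ℂ (s 2) + (goldenTheta : ℂ) * starRingEnd ℂ (s 3));
     Complex.I * alphaBar * (s 6 + (goldenThetaBar : ℂ) * s 7),
     alphaBar * (s 4 + (goldenThetaBar : ℂ) * s 5),
     -(Complex.I * (starRingEnd ℂ alphaBar) * (starRingEnd ℂ (s 2) + (goldenThetaBar : ℂ) * starRingEnd ℂ (s 3))),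
     (starRingEnd ℂ alphaBar) * (starRingEnd ℂ (s 0) + (goldenThetaBar : ℂ) * starRingEnd ℂ (s 1))]

/-- ṽ(Y): stack the columns of the 2×4 complex matrix Y into ℂ^8
(giving (Y₁₁,Y₂₁,Y₁₂,Y₂₂,Y₁₃,Y₂₃,Y₁₄,Y₂₄)) and replace each complex entry z
by the pair (Re z, Im z), producing a vector of ℝ^16 (Euclidean space). -/
def tildeVec (Y : Matrix (Fin 2) (Fin 4) ℂ) : EuclideanSpace ℝ (Fin 16) :=
  WithLp.toLp 2 fun (m : Fin 16) =>
    if m.val % 2 = 0 then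
      (Y ⟨m.val % 4 / 2, by omega⟩ ⟨m.val / 4, by have := m.isLt; omega⟩).re
    else
      (Y ⟨m.val % 4 / 2, by omega⟩ ⟨m.val / 4, by have := m.isLt; omega⟩).im

/-- Recover the complex symbol vector s ∈ ℂ^8 from its real coordinate vector
s̃ = (Re s₁, Im s₁, …, Re s₈, Im s₈) ∈ ℝ^16. -/
def sOfReal (v : Fin 16 → ℝ) : Fin 8 → ℂ :=
  fun k => (v ⟨2 * k.val, by have := k.isLt; omega⟩ : ℂ)
    + (v ⟨2 * k.val + 1, by have := k.isLt; omega⟩ : ℂ) * Complex.I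

/-- The j-th column h_j (0-indexed: `hcol H j` is h_{j+1} of the paper) of the
equivalent channel matrix H_eq: the image of the j-th standard basis vector of
ℝ^16 under the ℝ-linear map s̃ ↦ ṽ(H · X(s)). -/
def hcol (H : Matrix (Fin 2) (Fin 4) ℂ) (j : Fin 16) : EuclideanSpace ℝ (Fin 16) :=
  tildeVec (H * codeword (sOfReal (Pi.single j 1)))

/-- The Gram–Schmidt residual r_j (0-indexed) of the columns of H_eq:
r_j = h_j − Σ_{k<j} ⟨q_k, h_j⟩ q_k. -/
def rvec (H : Matrix (Fin 2) (Fin 4) ℂ) (j : Fin 16) : EuclideanSpace ℝ (Fin 16) :=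
  have : WellFoundedLT (Fin 16) := inferInstance
  InnerProductSpace.gramSchmidt ℝ (hcol H) j

/-- The Gram–Schmidt orthonormalization q_j = r_j / ‖r_j‖ (0-indexed). -/
def qvec (H : Matrix (Fin 2) (Fin 4) ℂ) (j : Fin 16) : EuclideanSpace ℝ (Fin 16) :=
  have : WellFoundedLT (Fin 16) := inferInstance
  InnerProductSpace.gramSchmidtNormed ℝ (hcol H) j

end MIMO3D

open MIMO3D

/-!
Two symmetries of the code drive the argument. Multiplying every symbol by `i` multiplies the
codeword on the right by `diag(i, i, -i, -i)`, and the integral map `goldenTwist` on symbol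
pairs multiplies it on the right by `√5 • diag(-1, 1, -1, 1)`. Through `ṽ`, right multiplication by `diag d` becomes an operator
`colScale d` on `ℝ^16` with adjoint `colScale (star d)`, so `J = colScale diag(i, i, -i, -i)` and
`JK`, where `K = colScale diag(-1, 1, -1, 1)`, are skew-adjoint. Both symbol maps preserve the
vectors supported on the first symbols, so `J` and `K` leave `span (h_1, …, h_12)` invariant and
`J` also leaves `span (h_1, …, h_14)` invariant; on the columns, `J h_13 = h_14`, `J h_15 = h_16`
and `2 h_15 = √5 K h_13 + h_13` (indices as in the paper: `hcol H 12` is `h_13`).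

For a skew-adjoint `T` leaving `span (h_j)_{j<n}` invariant, `r_n` is orthogonal to `T h_n`, and
if moreover `T h_n = h_{n+1}` then `r_{n+1} = T r_n`. This kills `⟨r_13, h_14⟩`, `⟨r_13, JK h_13⟩`
and `⟨r_15, h_16⟩`, hence `⟨r_13, h_16⟩`; and `r_14 = J r_13` reduces `⟨r_14, h_15⟩` to
`⟨r_13, JK h_13⟩` and `⟨r_13, h_14⟩`.
-/

open InnerProductSpace Submodule

section GramSchmidt

variable {𝕜 E ι : Type*} [RCLike 𝕜] [NormedAddCommGroup E] [InnerProductSpace 𝕜 E]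
  [LinearOrder ι] [LocallyFiniteOrderBot ι] [WellFoundedLT ι] (f : ι → E) {n : ι}

lemma inner_gramSchmidt_eq_zero_of_mem_span {x : E} (hx : x ∈ span 𝕜 (f '' Set.Iio n)) :
    inner 𝕜 (gramSchmidt 𝕜 f n) x = 0 := by
  refine (mem_orthogonal_singleton_iff_inner_right (𝕜 := 𝕜)).1 (span_le.2 ?_ hx)
  rintro _ ⟨i, hi, rfl⟩
  exact (mem_orthogonal_singleton_iff_inner_right (𝕜 := 𝕜)).2 (gramSchmidt_inv_triangular 𝕜 f hi)

lemma sub_gramSchmidt_mem_span (n : ι) : f n - gramSchmidt 𝕜 f n ∈ span 𝕜 (f '' Set.Iio n) := by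
  rw [gramSchmidt_def 𝕜 f n, sub_sub_cancel, ← span_gramSchmidt_Iio 𝕜 f n]
  refine sum_mem fun i hi => ?_
  rw [starProjection_singleton]
  exact smul_mem _ _ (subset_span ⟨i, Finset.mem_Iio.1 hi, rfl⟩)

lemma gramSchmidt_eq_of_sub_mem_span {v : E} (hv : f n - v ∈ span 𝕜 (f '' Set.Iio n))
    (horth : ∀ x ∈ span 𝕜 (f '' Set.Iio n), inner 𝕜 v x = 0) : gramSchmidt 𝕜 f n = v := by
  have hd : gramSchmidt 𝕜 f n - v ∈ span 𝕜 (f '' Set.Iio n) := by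
    simpa using sub_mem hv (sub_gramSchmidt_mem_span f n)
  rw [← sub_eq_zero, ← inner_self_eq_zero (𝕜 := 𝕜), inner_sub_left,
    inner_gramSchmidt_eq_zero_of_mem_span f hd, horth _ hd, sub_zero]

lemma inner_gramSchmidtNormed_eq_zero {x : E} (h : inner 𝕜 (gramSchmidt 𝕜 f n) x = 0) :
    inner 𝕜 (gramSchmidtNormed 𝕜 f n) x = 0 := by
  rw [gramSchmidtNormed, inner_smul_left, h, mul_zero]

end GramSchmidt

section SkewAdjoint

variable {E ι : Type*} [NormedAddCommGroup E] [InnerProductSpace ℝ E]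
  [LinearOrder ι] [LocallyFiniteOrderBot ι] [WellFoundedLT ι] {f : ι → E} {n : ι}
  {T : Module.End ℝ E}

lemma inner_gramSchmidt_apply_eq_zero (hT : ∀ x y, ⟪T x, y⟫_ℝ = -⟪x, T y⟫_ℝ)
    (hS : span ℝ (f '' Set.Iio n) ∈ T.invtSubmodule) :
    ⟪gramSchmidt ℝ f n, T (f n)⟫_ℝ = 0 := by
  have hskew : ⟪gramSchmidt ℝ f n, T (gramSchmidt ℝ f n)⟫_ℝ = 0 := by
    have := hT (gramSchmidt ℝ f n) (gramSchmidt ℝ f n)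
    rw [real_inner_comm] at this
    linarith
  rw [← sub_add_cancel (f n) (gramSchmidt ℝ f n), map_add, inner_add_right, hskew, add_zero]
  exact inner_gramSchmidt_eq_zero_of_mem_span f (hS (sub_gramSchmidt_mem_span f n))

lemma gramSchmidt_eq_apply_gramSchmidt (hT : ∀ x y, ⟪T x, y⟫_ℝ = -⟪x, T y⟫_ℝ)
    (hS : span ℝ (f '' Set.Iio n) ∈ T.invtSubmodule) {m : ι} (hnm : n ⋖ m)
    (hf : T (f n) = f m) : gramSchmidt ℝ f m = T (gramSchmidt ℝ f n) := by
  refine gramSchmidt_eq_of_sub_mem_span f ?_ fun x hx => ?_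
  · rw [← hf, ← map_sub]
    exact span_mono (Set.image_mono (Set.Iio_subset_Iio hnm.le))
      (hS (sub_gramSchmidt_mem_span f n))
  · rw [hnm.Iio_eq] at hx
    refine (mem_orthogonal_singleton_iff_inner_right (𝕜 := ℝ)).1 (span_le.2 ?_ hx)
    rintro _ ⟨j, hj, rfl⟩
    rw [SetLike.mem_coe, mem_orthogonal_singleton_iff_inner_right, hT, neg_eq_zero]
    rcases (Set.mem_Iic.1 hj).lt_or_eq with hj | rfl
    · exact inner_gramSchmidt_eq_zero_of_mem_span f (hS (subset_span ⟨j, hj, rfl⟩))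
    · exact inner_gramSchmidt_apply_eq_zero hT hS

end SkewAdjoint

namespace MIMO3D

open Complex

lemma goldenTheta_sq : goldenTheta ^ 2 = goldenTheta + 1 := by
  have h5 : Real.sqrt 5 ^ 2 = 5 := Real.sq_sqrt (by norm_num)
  unfold goldenTheta
  linear_combination h5 / 4

lemma goldenThetaBar_sq : goldenThetaBar ^ 2 = goldenThetaBar + 1 := by
  unfold goldenThetaBar
  linear_combination goldenTheta_sq

lemma two_mul_goldenTheta_sub_one : 2 * goldenTheta - 1 = Real.sqrt 5 := by
  unfold goldenTheta
  ring

lemma two_mul_goldenThetaBar_sub_one : 2 * goldenThetaBar - 1 = -Real.sqrt 5 := by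
  unfold goldenThetaBar
  linear_combination -two_mul_goldenTheta_sub_one

lemma sub_two_mul_add_mul_of_sq_eq {R : Type*} [CommRing R] {t : R} (ht : t ^ 2 = t + 1)
    (a b : R) :
    a - 2 * b + t * (-2 * a - b) = -(2 * t - 1) * (a + t * b) := by
  linear_combination 2 * b * ht

lemma neg_add_two_mul_add_mul_of_sq_eq {R : Type*} [CommRing R] {t : R} (ht : t ^ 2 = t + 1)
    (a b : R) :
    -a + 2 * b + t * (2 * a + b) = (2 * t - 1) * (a + t * b) := by
  linear_combination -2 * b * ht

/-- On each symbol pair `(a, b)` this multiplies `a + θ b` by `∓√5` and `a + θ̄ b` by `±√5`,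
because `θ` and `θ̄` are the roots of `t² = t + 1`. -/
def goldenTwist (s : Fin 8 → ℂ) : Fin 8 → ℂ :=
  ![s 0 - 2 * s 1, -2 * s 0 - s 1, -s 2 + 2 * s 3, 2 * s 2 + s 3,
    s 4 - 2 * s 5, -2 * s 4 - s 5, -s 6 + 2 * s 7, 2 * s 6 + s 7]

def diagI : Fin 4 → ℂ := ![I, I, -I, -I]

def diagSign : Fin 4 → ℂ := ![-1, 1, -1, 1]

lemma codeword_I_smul (s : Fin 8 → ℂ) :
    codeword (I • s) = codeword s * Matrix.diagonal diagI := by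
  ext i j
  fin_cases i <;> fin_cases j <;>
    simp [codeword, diagI, Matrix.mul_diagonal] <;> ring

lemma codeword_goldenTwist (s : Fin 8 → ℂ) :
    codeword (goldenTwist s) = (Real.sqrt 5 : ℂ) • (codeword s * Matrix.diagonal diagSign) := by
  have hθ : (goldenTheta : ℂ) ^ 2 = goldenTheta + 1 := by exact_mod_cast goldenTheta_sq
  have hθbar : (goldenThetaBar : ℂ) ^ 2 = goldenThetaBar + 1 := by
    exact_mod_cast goldenThetaBar_sq
  have h1 : 2 * (goldenTheta : ℂ) - 1 = Real.sqrt 5 := by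
    exact_mod_cast two_mul_goldenTheta_sub_one
  have h2 : 2 * (goldenThetaBar : ℂ) - 1 = -Real.sqrt 5 := by
    exact_mod_cast two_mul_goldenThetaBar_sub_one
  simp only [codeword, goldenTwist, Matrix.cons_val, map_add, map_sub, map_neg, map_mul, map_ofNat,
    sub_two_mul_add_mul_of_sq_eq hθ, neg_add_two_mul_add_mul_of_sq_eq hθ,
    sub_two_mul_add_mul_of_sq_eq hθbar, neg_add_two_mul_add_mul_of_sq_eq hθbar, h1, h2]
  ext i j
  simp only [Matrix.smul_apply, Matrix.mul_diagonal]
  fin_cases i <;> fin_cases j <;> simp [diagSign] <;> field_simp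

def codewordLinearMap : (Fin 8 → ℂ) →ₗ[ℝ] Matrix (Fin 4) (Fin 4) ℂ where
  toFun := codeword
  map_add' s t := by
    ext i j
    fin_cases i <;> fin_cases j <;> simp [codeword] <;> ring
  map_smul' a s := by
    ext i j
    fin_cases i <;> fin_cases j <;> simp [codeword] <;> ring

def tildeVecEquiv : Matrix (Fin 2) (Fin 4) ℂ ≃ₗ[ℝ] EuclideanSpace ℝ (Fin 16) where
  toFun := tildeVec
  invFun y := Matrix.of fun r c =>
    ⟨y ⟨4 * c + 2 * r, by omega⟩, y ⟨4 * c + 2 * r + 1, by omega⟩⟩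
  map_add' Y Z := by ext m; fin_cases m <;> simp [tildeVec]
  map_smul' a Y := by ext m; fin_cases m <;> simp [tildeVec]
  left_inv Y := by ext r c; fin_cases r <;> fin_cases c <;> rfl
  right_inv y := by ext m; fin_cases m <;> rfl

lemma tildeVecEquiv_apply (Y : Matrix (Fin 2) (Fin 4) ℂ) : tildeVecEquiv Y = tildeVec Y := rfl

lemma inner_tildeVec (Y Z : Matrix (Fin 2) (Fin 4) ℂ) :
    ⟪tildeVec Y, tildeVec Z⟫_ℝ = ∑ r, ∑ c, (starRingEnd ℂ (Y r c) * Z r c).re := by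
  simp [PiLp.inner_apply, Fin.sum_univ_succ, tildeVec, Complex.mul_re]
  ring

def colScale (d : Fin 4 → ℂ) : Module.End ℝ (EuclideanSpace ℝ (Fin 16)) :=
  tildeVecEquiv.conj (mulRightLinearMap (Fin 2) ℝ (Matrix.diagonal d))

lemma colScale_tildeVec (d : Fin 4 → ℂ) (Y : Matrix (Fin 2) (Fin 4) ℂ) :
    colScale d (tildeVec Y) = tildeVec (Y * Matrix.diagonal d) := by
  rw [colScale, LinearEquiv.conj_apply_apply, ← tildeVecEquiv_apply, LinearEquiv.symm_apply_apply]
  rfl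

lemma colScale_colScale (d e : Fin 4 → ℂ) (x : EuclideanSpace ℝ (Fin 16)) :
    colScale d (colScale e x) = colScale (e * d) x := by
  obtain ⟨Y, rfl⟩ := tildeVecEquiv.surjective x
  simp only [tildeVecEquiv_apply, colScale_tildeVec, Matrix.mul_assoc, Matrix.diagonal_mul_diagonal]
  rfl

lemma colScale_neg (d : Fin 4 → ℂ) : colScale (-d) = -colScale d := by
  ext1 x
  obtain ⟨Y, rfl⟩ := tildeVecEquiv.surjective x
  rw [LinearMap.neg_apply, tildeVecEquiv_apply, colScale_tildeVec, colScale_tildeVec,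
    show Matrix.diagonal (-d) = -Matrix.diagonal d from (Matrix.diagonal_neg d).symm,
    Matrix.mul_neg, ← tildeVecEquiv_apply, map_neg, tildeVecEquiv_apply]

lemma inner_colScale_left (d : Fin 4 → ℂ) (x y : EuclideanSpace ℝ (Fin 16)) :
    ⟪colScale d x, y⟫_ℝ = ⟪x, colScale (star d) y⟫_ℝ := by
  obtain ⟨X, rfl⟩ := tildeVecEquiv.surjective x
  obtain ⟨Y, rfl⟩ := tildeVecEquiv.surjective y
  simp only [tildeVecEquiv_apply, colScale_tildeVec, inner_tildeVec, Matrix.mul_diagonal,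
    map_mul, Pi.star_apply, Complex.star_def]
  refine Finset.sum_congr rfl fun r _ => Finset.sum_congr rfl fun c _ => ?_
  ring_nf

lemma inner_colScale_left_of_star_eq_neg {d : Fin 4 → ℂ} (hd : star d = -d)
    (x y : EuclideanSpace ℝ (Fin 16)) : ⟪colScale d x, y⟫_ℝ = -⟪x, colScale d y⟫_ℝ := by
  rw [inner_colScale_left, hd, colScale_neg, LinearMap.neg_apply, inner_neg_right]

lemma star_diagI : star diagI = -diagI := by
  ext c
  fin_cases c <;> simp [diagI]

lemma star_diagSign_mul_diagI : star (diagSign * diagI) = -(diagSign * diagI) := by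
  ext c
  fin_cases c <;> simp [diagI, diagSign]

def symbolMap (H : Matrix (Fin 2) (Fin 4) ℂ) : (Fin 8 → ℂ) →ₗ[ℝ] EuclideanSpace ℝ (Fin 16) :=
  tildeVecEquiv.toLinearMap ∘ₗ mulLeftLinearMap (Fin 4) ℝ H ∘ₗ codewordLinearMap

def leadingSymbols (m : ℕ) : Submodule ℂ (Fin 8 → ℂ) where
  carrier := {s | ∀ k : Fin 8, m ≤ k → s k = 0}
  add_mem' hs ht k hk := by simp [hs k hk, ht k hk]
  zero_mem' _ _ := rfl
  smul_mem' c s hs k hk := by simp [hs k hk]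

lemma goldenTwist_mem_leadingSymbols {m : ℕ} (hm : Even m) {s : Fin 8 → ℂ}
    (hs : s ∈ leadingSymbols m) : goldenTwist s ∈ leadingSymbols m := by
  obtain ⟨r, rfl⟩ := hm
  intro k hk
  have hs' : ∀ k : Fin 8, r + r ≤ k → s k = 0 := hs
  fin_cases k <;> simp only at hk <;> simp (disch := simp; omega) [goldenTwist, hs']

lemma sOfReal_single_two_mul (k : Fin 8) :
    sOfReal (Pi.single ⟨2 * k, by omega⟩ 1) = Pi.single k 1 := by
  ext k'
  simp only [sOfReal, Pi.single_apply, Fin.ext_iff]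
  split_ifs <;> simp_all
  omega

lemma sOfReal_single_two_mul_add_one (k : Fin 8) :
    sOfReal (Pi.single ⟨2 * k + 1, by omega⟩ 1) = Pi.single k I := by
  ext k'
  simp only [sOfReal, Pi.single_apply, Fin.ext_iff]
  split_ifs <;> simp_all
  omega

lemma span_sOfReal_single_Iio {n : Fin 16} {m : ℕ} (hn : (n : ℕ) = 2 * m) :
    span ℝ ((fun j => sOfReal (Pi.single j 1)) '' Set.Iio n) =
      (leadingSymbols m).restrictScalars ℝ := by
  apply le_antisymm
  · rw [span_le]
    rintro _ ⟨j, hj, rfl⟩ k hk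
    simp only [sOfReal, Pi.single_apply, Fin.ext_iff]
    split_ifs <;> simp_all [Fin.lt_def] <;> omega
  · intro s hs
    rw [← Finset.univ_sum_single s]
    refine sum_mem fun k _ => ?_
    by_cases hk : m ≤ k
    · rw [hs k hk, Pi.single_zero]
      exact zero_mem _
    · have hsplit : Pi.single k (s k) = (s k).re • sOfReal (Pi.single ⟨2 * k, by omega⟩ 1) +
          (s k).im • sOfReal (Pi.single ⟨2 * k + 1, by omega⟩ 1) := by
        rw [sOfReal_single_two_mul, sOfReal_single_two_mul_add_one]
        ext k'
        by_cases h : k' = k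
        · subst h
          simp
        · simp [h]
      rw [hsplit]
      exact add_mem (smul_mem _ _ (subset_span ⟨_, by simp [Fin.lt_def]; omega, rfl⟩))
        (smul_mem _ _ (subset_span ⟨_, by simp [Fin.lt_def]; omega, rfl⟩))

section Channel

variable (H : Matrix (Fin 2) (Fin 4) ℂ)

lemma symbolMap_apply (s : Fin 8 → ℂ) : symbolMap H s = tildeVec (H * codeword s) := rfl

lemma hcol_apply (j : Fin 16) : hcol H j = symbolMap H (sOfReal (Pi.single j 1)) := rfl

lemma symbolMap_I_smul (s : Fin 8 → ℂ) :
    symbolMap H (I • s) = colScale diagI (symbolMap H s) := by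
  rw [symbolMap_apply, symbolMap_apply, codeword_I_smul, ← Matrix.mul_assoc, colScale_tildeVec]

lemma symbolMap_goldenTwist (s : Fin 8 → ℂ) :
    symbolMap H (goldenTwist s) = Real.sqrt 5 • colScale diagSign (symbolMap H s) := by
  rw [symbolMap_apply, symbolMap_apply, codeword_goldenTwist, Matrix.mul_smul, ← Matrix.mul_assoc,
    colScale_tildeVec, Complex.coe_smul, ← tildeVecEquiv_apply, map_smul, tildeVecEquiv_apply]

lemma span_hcol_Iio {n : Fin 16} {m : ℕ} (hn : (n : ℕ) = 2 * m) :
    span ℝ (hcol H '' Set.Iio n) = ((leadingSymbols m).restrictScalars ℝ).map (symbolMap H) := by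
  rw [show hcol H = symbolMap H ∘ fun j => sOfReal (Pi.single j 1) from rfl, Set.image_comp,
    span_image, span_sOfReal_single_Iio hn]

lemma span_hcol_Iio_mem_invtSubmodule_diagI {n : Fin 16} {m : ℕ} (hn : (n : ℕ) = 2 * m) :
    span ℝ (hcol H '' Set.Iio n) ∈ (colScale diagI).invtSubmodule := by
  rw [span_hcol_Iio H hn]
  rintro _ ⟨s, hs, rfl⟩
  exact ⟨I • s, smul_mem _ I hs, symbolMap_I_smul H s⟩

lemma span_hcol_Iio_mem_invtSubmodule_diagSign {n : Fin 16} {m : ℕ} (hn : (n : ℕ) = 2 * m)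
    (hm : Even m) : span ℝ (hcol H '' Set.Iio n) ∈ (colScale diagSign).invtSubmodule := by
  rw [span_hcol_Iio H hn]
  rintro _ ⟨s, hs, rfl⟩
  refine ⟨(Real.sqrt 5)⁻¹ • goldenTwist s,
    smul_of_tower_mem _ _ (goldenTwist_mem_leadingSymbols hm hs), ?_⟩
  rw [map_smul, symbolMap_goldenTwist, inv_smul_smul₀ (by positivity)]

lemma span_hcol_twelve_mem_invtSubmodule_diagI :
    span ℝ (hcol H '' Set.Iio 12) ∈ (colScale diagI).invtSubmodule :=
  span_hcol_Iio_mem_invtSubmodule_diagI H (n := 12) (m := 6) rfl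

lemma span_hcol_twelve_mem_invtSubmodule_diagSign_mul_diagI :
    span ℝ (hcol H '' Set.Iio 12) ∈ (colScale (diagSign * diagI)).invtSubmodule := by
  rw [show colScale (diagSign * diagI) = colScale diagI ∘ₗ colScale diagSign from
    LinearMap.ext fun x => (colScale_colScale _ _ x).symm]
  exact Module.End.invtSubmodule.comp _ (span_hcol_twelve_mem_invtSubmodule_diagI H)
    (span_hcol_Iio_mem_invtSubmodule_diagSign H (n := 12) (m := 6) rfl ⟨3, rfl⟩)

lemma hcol_thirteen : hcol H 13 = colScale diagI (hcol H 12) := by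
  rw [hcol_apply, hcol_apply, ← symbolMap_I_smul]
  congr 1
  funext k
  fin_cases k <;> simp [sOfReal]

lemma hcol_fifteen : hcol H 15 = colScale diagI (hcol H 14) := by
  rw [hcol_apply, hcol_apply, ← symbolMap_I_smul]
  congr 1
  funext k
  fin_cases k <;> simp [sOfReal]

lemma two_smul_hcol_fourteen :
    (2 : ℝ) • hcol H 14 = Real.sqrt 5 • colScale diagSign (hcol H 12) + hcol H 12 := by
  rw [hcol_apply, hcol_apply, ← symbolMap_goldenTwist, ← map_smul, ← map_add]
  congr 1
  funext k
  fin_cases k <;> simp [sOfReal, goldenTwist]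

lemma two_smul_hcol_fifteen : (2 : ℝ) • hcol H 15 =
    Real.sqrt 5 • colScale (diagSign * diagI) (hcol H 12) + hcol H 13 := by
  rw [hcol_fifteen, hcol_thirteen, ← map_smul, two_smul_hcol_fourteen, map_add, map_smul,
    colScale_colScale]

lemma inner_gramSchmidt_twelve_hcol_thirteen :
    ⟪gramSchmidt ℝ (hcol H) 12, hcol H 13⟫_ℝ = 0 := by
  rw [hcol_thirteen]
  exact inner_gramSchmidt_apply_eq_zero (inner_colScale_left_of_star_eq_neg star_diagI)
    (span_hcol_twelve_mem_invtSubmodule_diagI H)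

lemma inner_gramSchmidt_twelve_colScale_hcol_twelve :
    ⟪gramSchmidt ℝ (hcol H) 12, colScale (diagSign * diagI) (hcol H 12)⟫_ℝ = 0 :=
  inner_gramSchmidt_apply_eq_zero (inner_colScale_left_of_star_eq_neg star_diagSign_mul_diagI)
    (span_hcol_twelve_mem_invtSubmodule_diagSign_mul_diagI H)

lemma inner_gramSchmidt_twelve_hcol_fifteen :
    ⟪gramSchmidt ℝ (hcol H) 12, hcol H 15⟫_ℝ = 0 := by
  have h := congrArg (⟪gramSchmidt ℝ (hcol H) 12, ·⟫_ℝ) (two_smul_hcol_fifteen H)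
  simp only [inner_add_right, real_inner_smul_right, inner_gramSchmidt_twelve_colScale_hcol_twelve,
    inner_gramSchmidt_twelve_hcol_thirteen] at h
  linarith

lemma gramSchmidt_thirteen :
    gramSchmidt ℝ (hcol H) 13 = colScale diagI (gramSchmidt ℝ (hcol H) 12) :=
  gramSchmidt_eq_apply_gramSchmidt (inner_colScale_left_of_star_eq_neg star_diagI)
    (span_hcol_twelve_mem_invtSubmodule_diagI H) (Fin.covBy_iff.2 (Order.covBy_add_one 12))
    (hcol_thirteen H).symm

lemma inner_gramSchmidt_thirteen_hcol_fourteen :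
    ⟪gramSchmidt ℝ (hcol H) 13, hcol H 14⟫_ℝ = 0 := by
  have hJ := inner_colScale_left_of_star_eq_neg star_diagI
  rw [gramSchmidt_thirteen]
  have hsign :
      ⟪colScale diagI (gramSchmidt ℝ (hcol H) 12), colScale diagSign (hcol H 12)⟫_ℝ = 0 := by
    rw [hJ, colScale_colScale, inner_gramSchmidt_twelve_colScale_hcol_twelve, neg_zero]
  have hone : ⟪colScale diagI (gramSchmidt ℝ (hcol H) 12), hcol H 12⟫_ℝ = 0 := by
    rw [hJ, ← hcol_thirteen, inner_gramSchmidt_twelve_hcol_thirteen, neg_zero]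
  have h := congrArg (⟪colScale diagI (gramSchmidt ℝ (hcol H) 12), ·⟫_ℝ) (two_smul_hcol_fourteen H)
  simp only [inner_add_right, real_inner_smul_right, hsign, hone] at h
  linarith

lemma inner_gramSchmidt_fourteen_hcol_fifteen :
    ⟪gramSchmidt ℝ (hcol H) 14, hcol H 15⟫_ℝ = 0 := by
  rw [hcol_fifteen]
  exact inner_gramSchmidt_apply_eq_zero (inner_colScale_left_of_star_eq_neg star_diagI)
    (span_hcol_Iio_mem_invtSubmodule_diagI H (n := 14) (m := 7) rfl)

end Channel

end MIMO3D

theorem stmt5_general (H : Matrix (Fin 2) (Fin 4) ℂ) :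
    ⟪qvec H 12, hcol H 13⟫_ℝ = 0 ∧ ⟪qvec H 12, hcol H 15⟫_ℝ = 0 ∧
    ⟪qvec H 13, hcol H 14⟫_ℝ = 0 ∧ ⟪qvec H 14, hcol H 15⟫_ℝ = 0 :=
  ⟨inner_gramSchmidtNormed_eq_zero _ (inner_gramSchmidt_twelve_hcol_thirteen H),
    inner_gramSchmidtNormed_eq_zero _ (inner_gramSchmidt_twelve_hcol_fifteen H),
    inner_gramSchmidtNormed_eq_zero _ (inner_gramSchmidt_thirteen_hcol_fourteen H),
    inner_gramSchmidtNormed_eq_zero _ (inner_gramSchmidt_fourteen_hcol_fifteen H)⟩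

/-- The fourth diagonal block R₄₄ of R has the same zero pattern as
R₁₁: ⟨q₁₃,h₁₄⟩ = ⟨q₁₃,h₁₆⟩ = ⟨q₁₄,h₁₅⟩ = ⟨q₁₅,h₁₆⟩ = 0 (paper's 1-based indices;
0-indexed here as q₁₂,…,q₁₅ and h₁₂,…,h₁₅). -/
theorem stmt5 (H : Matrix (Fin 2) (Fin 4) ℂ) (hLI : LinearIndependent ℝ (hcol H)) :
    ⟪qvec H 12, hcol H 13⟫_ℝ = 0 ∧ ⟪qvec H 12, hcol H 15⟫_ℝ = 0 ∧
    ⟪qvec H 13, hcol H 14⟫_ℝ = 0 ∧ ⟪qvec H 14, hcol H 15⟫_ℝ = 0 :=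
  stmt5_general H
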